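/- arXiv:1901.09254 — 4 statements merged into one kernel-verified Lean document; each statement's English description precedes it below -/
import Mathlib

section
/- If a Banach space Z is stable under finite dimensional quotients and F is a finite dimensional Banach space, then Z is isomorphic to Z × F. -/
/-- A Banach space `Z` is *stable under finite dimensional quotients* if `Z` is
isomorphic (via a continuous linear equivalence) to every closed subspace of `Z`
that admits a finite dimensional complement. -/
def StableUnderFinDimQuotients (Z : Type*) [NormedAddCommGroup Z] [NormedSpace ℂ Z] : Prop :=
  ∀ V F : Submodule ℂ Z, IsClosed (V : Set Z) → IsCompl V F → FiniteDimensional ℂ F →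
    Nonempty (Z ≃L[ℂ] V)

/-!
Choose a subspace `G ⊆ Z` with `dim G = dim F`; it exists because `Z` is infinite dimensional.
By Hahn–Banach, the finite dimensional `G` has a closed topological complement `V`, so
`Z ≃ V × G`. Stability gives `Z ≃ V`, and `G ≃ F` as finite dimensional spaces of equal
dimension, whence `Z ≃ Z × F`.
-/

open Module Submodule

theorem Submodule.exists_finiteDimensional_finrank_eq {K V : Type*} [DivisionRing K]
    [AddCommGroup V] [Module K V] (h : ¬ FiniteDimensional K V) (n : ℕ) :
    ∃ G : Submodule K V, FiniteDimensional K G ∧ finrank K G = n := by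
  have hn : (n : Cardinal) ≤ Module.rank K V :=
    (Cardinal.natCast_lt_aleph0 (n := n)).le.trans <| not_lt.mp <| mt rank_lt_aleph0_iff.mp h
  obtain ⟨x, hx⟩ := exists_linearIndependent_of_le_rank hn
  exact ⟨span K (Set.range x), FiniteDimensional.span_of_finite K (Set.finite_range x),
    by simpa using finrank_span_eq_card hx⟩

theorem Submodule.exists_isClosed_isTopCompl_of_finiteDimensional {𝕜 E : Type*} [RCLike 𝕜]
    [NormedAddCommGroup E] [NormedSpace 𝕜 E] (G : Submodule 𝕜 E) [FiniteDimensional 𝕜 G] :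
    ∃ V : Submodule 𝕜 E, IsClosed (V : Set E) ∧ IsTopCompl V G := by
  obtain ⟨V, hV⟩ := (ClosedComplemented.of_finiteDimensional G).exists_isTopCompl
  exact ⟨V, hV.isClosed', hV.symm⟩

theorem stable_iso_prod_finDim_general
    (Z : Type*) [NormedAddCommGroup Z] [NormedSpace ℂ Z]
    (hZ : StableUnderFinDimQuotients Z) (hinf : ¬ FiniteDimensional ℂ Z)
    (F : Type*) [NormedAddCommGroup F] [NormedSpace ℂ F] [FiniteDimensional ℂ F] :
    Nonempty (Z ≃L[ℂ] (Z × F)) := by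
  obtain ⟨G, hGfin, hGrank⟩ := exists_finiteDimensional_finrank_eq hinf (finrank ℂ F)
  obtain ⟨V, hVclosed, hVG⟩ := G.exists_isClosed_isTopCompl_of_finiteDimensional
  obtain ⟨eZV⟩ := hZ V G hVclosed hVG.isCompl hGfin
  let eGF : G ≃L[ℂ] F := ContinuousLinearEquiv.ofFinrankEq hGrank
  exact ⟨(prodEquivOfIsTopCompl V G hVG).symm.trans (eZV.symm.prodCongr eGF)⟩

theorem stable_iso_prod_finDim
    (Z : Type*) [NormedAddCommGroup Z] [NormedSpace ℂ Z] [CompleteSpace Z]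
    (hZ : StableUnderFinDimQuotients Z) (hinf : ¬ FiniteDimensional ℂ Z)
    (F : Type*) [NormedAddCommGroup F] [NormedSpace ℂ F] [FiniteDimensional ℂ F] :
    Nonempty (Z ≃L[ℂ] (Z × F)) :=
  stable_iso_prod_finDim_general Z hZ hinf F
end

section
/- Let X and Y be essentially incomparable Banach spaces, and let U : X → X and V : Y → Y be bounded operators that are matricially coupled, i.e., there is an invertible operator Û on X × Y whose (1,1) entry is U and whose inverse has (2,2) entry V. Then U and V are Fredholm operators. -/
/-!
Write `Û = [[U, B], [C, D]]` and `Û⁻¹ = [[P, Q], [R, V]]`. The diagonal corners of `Û Û⁻¹ = 1`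
and `Û⁻¹ Û = 1` give `UP = 1 - BR`, `PU = 1 - QC`, `DV = 1 - CQ` and `VD = 1 - RB`. As `R` and
`C` map `X` to `Y`, they are inessential, so `1 - BR` and `1 - QC` are Fredholm; so are `1 - RB`
and `1 - CQ`, because `ker (1 - ST) = S (ker (1 - TS))` and `range (1 - ST) = T⁻¹ (range (1 - TS))`.
Finally, `U` is Fredholm as soon as `UP` and `PU` are: `ker U ⊆ ker PU` and `range U ⊇ range UP`,
and a subspace containing a closed subspace of finite codimension is again closed.
-/

open ContinuousLinearMap

variable {X Y : Type*} [NormedAddCommGroup X] [NormedSpace ℂ X]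
  [NormedAddCommGroup Y] [NormedSpace ℂ Y]

/-- A bounded operator is *Fredholm* if it has finite dimensional kernel and
closed range of finite codimension. -/
def IsFredholm (T : X →L[ℂ] Y) : Prop :=
  FiniteDimensional ℂ (LinearMap.ker (T : X →ₗ[ℂ] Y)) ∧ IsClosed (LinearMap.range (T : X →ₗ[ℂ] Y) : Set Y) ∧
    FiniteDimensional ℂ (Y ⧸ LinearMap.range (T : X →ₗ[ℂ] Y))

/-- The Fredholm index `dim ker − dim coker`. -/
noncomputable def fredholmIndex (T : X →L[ℂ] Y) : ℤ :=
  (Module.finrank ℂ (LinearMap.ker (T : X →ₗ[ℂ] Y)) : ℤ) - (Module.finrank ℂ (Y ⧸ LinearMap.range (T : X →ₗ[ℂ] Y)) : ℤ)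

/-- `S : X → Y` is *inessential* if `I_X − T S` is Fredholm for every bounded `T : Y → X`. -/
def Inessential (S : X →L[ℂ] Y) : Prop :=
  ∀ T : Y →L[ℂ] X, _root_.IsFredholm (ContinuousLinearMap.id ℂ X - T ∘L S)

/-- Banach spaces `X`, `Y` are *essentially incomparable* if every bounded operator
`X → Y` is inessential. -/
def EssentiallyIncomparable (X Y : Type*) [NormedAddCommGroup X] [NormedSpace ℂ X]
    [NormedAddCommGroup Y] [NormedSpace ℂ Y] : Prop :=
  ∀ S : X →L[ℂ] Y, Inessential S

/-- `U` and `V` are *Schur coupled* if they arise as the two Schur complements of a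
`2 × 2` block operator on `X × Y` with invertible diagonal entries. -/
def SchurCoupled (U : X →L[ℂ] X) (V : Y →L[ℂ] Y) : Prop :=
  ∃ (A : X ≃L[ℂ] X) (D : Y ≃L[ℂ] Y) (B : Y →L[ℂ] X) (C : X →L[ℂ] Y),
    U = (A : X →L[ℂ] X) - B ∘L (D.symm : Y →L[ℂ] Y) ∘L C ∧
    V = (D : Y →L[ℂ] Y) - C ∘L (A.symm : X →L[ℂ] X) ∘L B

namespace LinearMap

variable {R M N : Type*} [Ring R] [AddCommGroup M] [Module R M] [AddCommGroup N] [Module R N]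

theorem ker_id_sub_comp_eq_map (S : M →ₗ[R] N) (T : N →ₗ[R] M) :
    ker (id - S ∘ₗ T) = (ker (id - T ∘ₗ S)).map S := by
  ext y
  simp only [mem_ker, Submodule.mem_map, sub_apply, id_apply, comp_apply, sub_eq_zero]
  constructor
  · intro hy
    exact ⟨T y, by rw [← hy], hy.symm⟩
  · rintro ⟨x, hx, rfl⟩
    rw [← hx]

theorem range_id_sub_comp_eq_comap (S : M →ₗ[R] N) (T : N →ₗ[R] M) :
    range (id - S ∘ₗ T) = (range (id - T ∘ₗ S)).comap T := by
  ext y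
  simp only [mem_range, Submodule.mem_comap, sub_apply, id_apply, comp_apply]
  constructor
  · rintro ⟨z, rfl⟩
    exact ⟨T z, by rw [map_sub]⟩
  · rintro ⟨x, hx⟩
    -- `T y = x - T S x` gives `y = (1 - S T) (y + S x)`
    refine ⟨y + S x, ?_⟩
    rw [map_add, map_add, ← hx, map_sub]
    abel

end LinearMap

theorem Submodule.CoFG.comap {R M N : Type*} [Ring R] [IsNoetherianRing R] [AddCommGroup M]
    [Module R M] [AddCommGroup N] [Module R N] {p : Submodule R N} (hp : p.CoFG)
    (f : M →ₗ[R] N) : (p.comap f).CoFG :=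
  Module.Finite.of_injective ((p.comap f).mapQ p f le_rfl) (by
    rw [← LinearMap.ker_eq_bot, Submodule.ker_mapQ]; simp)

section Fredholm

variable {E F : Type*} [NormedAddCommGroup E] [NormedSpace ℂ E]
  [NormedAddCommGroup F] [NormedSpace ℂ F]

theorem IsFredholm.id_sub_comp_comm {S : E →L[ℂ] F} {T : F →L[ℂ] E}
    (h : _root_.IsFredholm (ContinuousLinearMap.id ℂ E - T ∘L S)) :
    _root_.IsFredholm (ContinuousLinearMap.id ℂ F - S ∘L T) := by
  obtain ⟨hker, hclosed, hcoker⟩ := h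
  have hK := LinearMap.ker_id_sub_comp_eq_map (S : E →ₗ[ℂ] F) T
  have hR := LinearMap.range_id_sub_comp_eq_comap (S : E →ₗ[ℂ] F) T
  refine ⟨?_, ?_, ?_⟩
  · have : FiniteDimensional ℂ (LinearMap.ker (LinearMap.id - (T : F →ₗ[ℂ] E) ∘ₗ S)) := hker
    exact hK ▸ inferInstance
  · exact hR ▸ hclosed.preimage T.continuous
  · exact hR ▸ Submodule.CoFG.comap hcoker _

theorem IsFredholm.of_comp_of_comp {U : E →L[ℂ] F} {P : F →L[ℂ] E}
    (hUP : _root_.IsFredholm (U ∘L P)) (hPU : _root_.IsFredholm (P ∘L U)) :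
    _root_.IsFredholm U := by
  obtain ⟨-, hclosed, hcoker⟩ := hUP
  have hker : LinearMap.ker (U : E →ₗ[ℂ] F) ≤ LinearMap.ker (P ∘L U : E →ₗ[ℂ] E) :=
    LinearMap.ker_le_ker_comp _ _
  have hrange : LinearMap.range (U ∘L P : F →ₗ[ℂ] F) ≤ LinearMap.range (U : E →ₗ[ℂ] F) :=
    LinearMap.range_comp_le_range _ _
  have := hPU.1
  exact ⟨Submodule.finiteDimensional_of_le hker,
    Submodule.isClosed_mono_of_finiteDimensional_quotient hclosed hrange,
    Submodule.CoFG.of_le hrange hcoker⟩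

end Fredholm

namespace ContinuousLinearMap

variable {R M N : Type*} [Semiring R] [TopologicalSpace M] [AddCommMonoid M] [Module R M]
  [ContinuousAdd M] [TopologicalSpace N] [AddCommMonoid N] [Module R N] [ContinuousAdd N]

theorem corner_fst_of_comp_eq_id (A W : (M × N) →L[R] (M × N))
    (h : A ∘L W = ContinuousLinearMap.id R (M × N)) :
    (fst R M N ∘L A ∘L inl R M N) ∘L (fst R M N ∘L W ∘L inl R M N) +
      (fst R M N ∘L A ∘L inr R M N) ∘L (snd R M N ∘L W ∘L inl R M N) =
      ContinuousLinearMap.id R M := by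
  ext x
  have := congrArg Prod.fst (DFunLike.congr_fun h (x, 0))
  rw [← A.coprod_comp_inl_inr, comp_apply, coprod_apply] at this
  simpa using this

theorem corner_snd_of_comp_eq_id (A W : (M × N) →L[R] (M × N))
    (h : A ∘L W = ContinuousLinearMap.id R (M × N)) :
    (snd R M N ∘L A ∘L inr R M N) ∘L (snd R M N ∘L W ∘L inr R M N) +
      (snd R M N ∘L A ∘L inl R M N) ∘L (fst R M N ∘L W ∘L inr R M N) =
      ContinuousLinearMap.id R N := by
  ext y
  have := congrArg Prod.snd (DFunLike.congr_fun h (0, y))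
  rw [← A.coprod_comp_inl_inr, comp_apply, coprod_apply] at this
  simpa [add_comm] using this

end ContinuousLinearMap

namespace EssentiallyIncomparable

variable {X Y : Type*} [NormedAddCommGroup X] [NormedSpace ℂ X]
  [NormedAddCommGroup Y] [NormedSpace ℂ Y]

theorem isFredholm_corner_fst_comp (hXY : EssentiallyIncomparable X Y)
    (A W : (X × Y) →L[ℂ] (X × Y)) (h : A ∘L W = ContinuousLinearMap.id ℂ (X × Y)) :
    _root_.IsFredholm ((fst ℂ X Y ∘L A ∘L inl ℂ X Y) ∘L (fst ℂ X Y ∘L W ∘L inl ℂ X Y)) := by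
  rw [eq_sub_of_add_eq (corner_fst_of_comp_eq_id A W h)]
  exact hXY _ _

theorem isFredholm_corner_snd_comp (hXY : EssentiallyIncomparable X Y)
    (A W : (X × Y) →L[ℂ] (X × Y)) (h : A ∘L W = ContinuousLinearMap.id ℂ (X × Y)) :
    _root_.IsFredholm ((snd ℂ X Y ∘L A ∘L inr ℂ X Y) ∘L (snd ℂ X Y ∘L W ∘L inr ℂ X Y)) := by
  rw [eq_sub_of_add_eq (corner_snd_of_comp_eq_id A W h)]
  exact (hXY _ _).id_sub_comp_comm

end EssentiallyIncomparable

theorem matriciallyCoupled_fredholm_general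
    {X Y : Type*} [NormedAddCommGroup X] [NormedSpace ℂ X]
    [NormedAddCommGroup Y] [NormedSpace ℂ Y]
    (hXY : EssentiallyIncomparable X Y)
    (U : X →L[ℂ] X) (V : Y →L[ℂ] Y)
    (Uhat : (X × Y) ≃L[ℂ] (X × Y))
    (hU : (ContinuousLinearMap.fst ℂ X Y) ∘L (Uhat : (X × Y) →L[ℂ] (X × Y)) ∘L
      (ContinuousLinearMap.inl ℂ X Y) = U)
    (hV : (ContinuousLinearMap.snd ℂ X Y) ∘L (Uhat.symm : (X × Y) →L[ℂ] (X × Y)) ∘L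
      (ContinuousLinearMap.inr ℂ X Y) = V) :
    _root_.IsFredholm U ∧ _root_.IsFredholm V := by
  have hright := Uhat.coe_comp_coe_symm
  have hleft := Uhat.coe_symm_comp_coe
  subst hU hV
  exact ⟨.of_comp_of_comp (hXY.isFredholm_corner_fst_comp _ _ hright)
      (hXY.isFredholm_corner_fst_comp _ _ hleft),
    .of_comp_of_comp (hXY.isFredholm_corner_snd_comp _ _ hleft)
      (hXY.isFredholm_corner_snd_comp _ _ hright)⟩

theorem matriciallyCoupled_fredholm
    {X Y : Type*} [NormedAddCommGroup X] [NormedSpace ℂ X] [CompleteSpace X]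
    [NormedAddCommGroup Y] [NormedSpace ℂ Y] [CompleteSpace Y]
    (hXY : EssentiallyIncomparable X Y)
    (U : X →L[ℂ] X) (V : Y →L[ℂ] Y)
    (Uhat : (X × Y) ≃L[ℂ] (X × Y))
    (hU : (ContinuousLinearMap.fst ℂ X Y) ∘L (Uhat : (X × Y) →L[ℂ] (X × Y)) ∘L
      (ContinuousLinearMap.inl ℂ X Y) = U)
    (hV : (ContinuousLinearMap.snd ℂ X Y) ∘L (Uhat.symm : (X × Y) →L[ℂ] (X × Y)) ∘L
      (ContinuousLinearMap.inr ℂ X Y) = V) :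
    _root_.IsFredholm U ∧ _root_.IsFredholm V :=
  matriciallyCoupled_fredholm_general hXY U V Uhat hU hV
end

section
/- Two Banach spaces X and Y are essentially incomparable if and only if every pair of bounded operators U ∈ B(X), V ∈ B(Y) that are Schur coupled consists of Fredholm operators. -/
open ContinuousLinearMap

variable {X Y : Type*} [NormedAddCommGroup X] [NormedSpace ℂ X]
  [NormedAddCommGroup Y] [NormedSpace ℂ Y]

/-!
Factoring out the invertible diagonal entries, `A - B D⁻¹ C = A (1 - (A⁻¹ B D⁻¹) C)` and
`D - C A⁻¹ B = D (1 - (D⁻¹ C) (A⁻¹ B))`, so Schur coupled operators are Fredholm as soon as all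
operators `1 - T S` on `X` and `1 - S T` on `Y` are. Jacobson's trick moves Fredholmness from
`1 - T S` to `1 - S T`: `T` maps `ker (1 - S T)` injectively into `ker (1 - T S)`, and `S` induces a
surjection of the cokernel of `1 - T S` onto that of `1 - S T`. Conversely, `1 - T S` and `1 - S T`
are Schur coupled through the block operator `[[1, T], [S, 1]]`.
-/

theorem ContinuousLinearMap.isClosed_range_of_finiteDimensional_quotient
    {𝕜 E F : Type*} [NontriviallyNormedField 𝕜] [CompleteSpace 𝕜]
    [NormedAddCommGroup E] [NormedSpace 𝕜 E] [CompleteSpace E]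
    [NormedAddCommGroup F] [NormedSpace 𝕜 F] [CompleteSpace F]
    (T : E →L[𝕜] F) [FiniteDimensional 𝕜 (F ⧸ LinearMap.range (T : E →ₗ[𝕜] F))] :
    IsClosed (LinearMap.range (T : E →ₗ[𝕜] F) : Set F) := by
  set p := LinearMap.range (T : E →ₗ[𝕜] F)
  obtain ⟨G, hpG⟩ := Submodule.exists_isCompl p
  have : FiniteDimensional 𝕜 G := .equiv (Submodule.quotientEquivOfIsCompl p G hpG)
  have : CompleteSpace G := FiniteDimensional.complete 𝕜 G
  -- `(x, g) ↦ T x + g` is onto, hence a quotient map by the open mapping theorem,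
  -- and it pulls `p` back to the closed set `{g = 0}`.
  let Φ : E × G →L[𝕜] F := T ∘L fst 𝕜 E G + G.subtypeL ∘L snd 𝕜 E G
  have hΦ : Function.Surjective Φ := by
    intro y
    have hy : y ∈ p ⊔ G := hpG.sup_eq_top ▸ Submodule.mem_top
    obtain ⟨_, ⟨x, rfl⟩, g, hg, rfl⟩ := Submodule.mem_sup.mp hy
    exact ⟨(x, ⟨g, hg⟩), rfl⟩
  have hpre : Φ ⁻¹' p = {z | (z.2 : F) = 0} := by
    ext ⟨x, g⟩
    have hTx : T x ∈ p := LinearMap.mem_range_self _ x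
    change T x + (g : F) ∈ p ↔ (g : F) = 0
    rw [Submodule.add_mem_iff_right p hTx]
    exact ⟨fun hg => Submodule.disjoint_def.mp hpG.disjoint _ hg g.2, fun hg => hg ▸ p.zero_mem⟩
  refine (Φ.isQuotientMap hΦ).isClosed_preimage.mp ?_
  rw [hpre]
  exact isClosed_eq (continuous_subtype_val.comp continuous_snd) continuous_const

namespace LinearMap

variable {K M N : Type*} [DivisionRing K] [AddCommGroup M] [Module K M] [AddCommGroup N] [Module K N]
  (S : M →ₗ[K] N) (T : N →ₗ[K] M)

theorem finiteDimensional_ker_id_sub_comp_swap (h : FiniteDimensional K (ker (id - T ∘ₗ S))) :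
    FiniteDimensional K (ker (id - S ∘ₗ T)) := by
  have hmaps : ∀ y ∈ ker (id - S ∘ₗ T), T y ∈ ker (id - T ∘ₗ S) := fun y hy => by
    simpa using congrArg T (mem_ker.mp hy)
  refine .of_injective (T.restrict hmaps) fun y₁ y₂ hT => ?_
  have hy : ∀ y ∈ ker (id - S ∘ₗ T), y = S (T y) := fun y hy => sub_eq_zero.mp (mem_ker.mp hy)
  exact Subtype.ext <| (hy _ y₁.2).trans <| (congrArg (S ∘ Subtype.val) hT).trans (hy _ y₂.2).symm

theorem finiteDimensional_quotient_range_id_sub_comp_swap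
    (h : FiniteDimensional K (M ⧸ range (id - T ∘ₗ S))) :
    FiniteDimensional K (N ⧸ range (id - S ∘ₗ T)) := by
  have hle : range (id - T ∘ₗ S) ≤ (range (id - S ∘ₗ T)).comap S := by
    rintro _ ⟨x, rfl⟩
    exact ⟨S x, by simp⟩
  refine .of_surjective (Submodule.mapQ _ _ S hle) fun z => ?_
  obtain ⟨y, rfl⟩ := Submodule.Quotient.mk_surjective _ z
  -- `S (T y) ≡ y` modulo the range of `1 - S T`
  refine ⟨Submodule.Quotient.mk (T y), (Submodule.Quotient.eq _).mpr ⟨-y, by simp [neg_add_eq_sub]⟩⟩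

end LinearMap

theorem IsFredholm.of_finiteDimensional [CompleteSpace X] [CompleteSpace Y] {T : X →L[ℂ] Y}
    (hker : FiniteDimensional ℂ (LinearMap.ker (T : X →ₗ[ℂ] Y)))
    (hcoker : FiniteDimensional ℂ (Y ⧸ LinearMap.range (T : X →ₗ[ℂ] Y))) :
    _root_.IsFredholm T :=
  ⟨hker, T.isClosed_range_of_finiteDimensional_quotient, hcoker⟩

theorem IsFredholm.equiv_comp {Z : Type*} [NormedAddCommGroup Z] [NormedSpace ℂ Z]
    (e : Y ≃L[ℂ] Z) {T : X →L[ℂ] Y} (hT : _root_.IsFredholm T) :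
    _root_.IsFredholm ((e : Y →L[ℂ] Z) ∘L T) := by
  obtain ⟨hker, hclosed, hcoker⟩ := hT
  have hrange : LinearMap.range (((e : Y →L[ℂ] Z) ∘L T : X →L[ℂ] Z) : X →ₗ[ℂ] Z) =
      (LinearMap.range (T : X →ₗ[ℂ] Y)).map (e.toLinearEquiv : Y →ₗ[ℂ] Z) :=
    LinearMap.range_comp _ _
  refine ⟨?_, ?_, ?_⟩
  · rwa [show LinearMap.ker (((e : Y →L[ℂ] Z) ∘L T : X →L[ℂ] Z) : X →ₗ[ℂ] Z) =
      LinearMap.ker (T : X →ₗ[ℂ] Y) from LinearEquiv.ker_comp e.toLinearEquiv _]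
  · rw [hrange, Submodule.map_coe]
    exact e.toHomeomorph.isClosedMap _ hclosed
  · rw [hrange]
    exact .equiv (Submodule.Quotient.equiv _ _ e.toLinearEquiv rfl)

theorem IsFredholm.id_sub_comp_swap [CompleteSpace Y] {S : X →L[ℂ] Y} {T : Y →L[ℂ] X}
    (h : _root_.IsFredholm (ContinuousLinearMap.id ℂ X - T ∘L S)) :
    _root_.IsFredholm (ContinuousLinearMap.id ℂ Y - S ∘L T) :=
  .of_finiteDimensional ((S : X →ₗ[ℂ] Y).finiteDimensional_ker_id_sub_comp_swap T h.1)
    ((S : X →ₗ[ℂ] Y).finiteDimensional_quotient_range_id_sub_comp_swap T h.2.2)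

theorem schurCoupled_id_sub_comp (S : X →L[ℂ] Y) (T : Y →L[ℂ] X) :
    SchurCoupled (ContinuousLinearMap.id ℂ X - T ∘L S) (ContinuousLinearMap.id ℂ Y - S ∘L T) :=
  ⟨.refl ℂ X, .refl ℂ Y, T, S, rfl, rfl⟩

theorem SchurCoupled.isFredholm_left {U : X →L[ℂ] X} {V : Y →L[ℂ] Y}
    (hXY : EssentiallyIncomparable X Y) (hUV : SchurCoupled U V) :
    _root_.IsFredholm U := by
  obtain ⟨A, D, B, C, rfl, -⟩ := hUV
  have hU : (A : X →L[ℂ] X) - B ∘L (D.symm : Y →L[ℂ] Y) ∘L C = (A : X →L[ℂ] X) ∘L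
      (ContinuousLinearMap.id ℂ X - ((A.symm : X →L[ℂ] X) ∘L B ∘L (D.symm : Y →L[ℂ] Y)) ∘L C) := by
    ext; simp
  rw [hU]
  exact (hXY C _).equiv_comp A

theorem SchurCoupled.isFredholm_right [CompleteSpace Y] {U : X →L[ℂ] X} {V : Y →L[ℂ] Y}
    (hXY : EssentiallyIncomparable X Y) (hUV : SchurCoupled U V) :
    _root_.IsFredholm V := by
  obtain ⟨A, D, B, C, -, rfl⟩ := hUV
  have hV : (D : Y →L[ℂ] Y) - C ∘L (A.symm : X →L[ℂ] X) ∘L B = (D : Y →L[ℂ] Y) ∘L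
      (ContinuousLinearMap.id ℂ Y - ((D.symm : Y →L[ℂ] Y) ∘L C) ∘L ((A.symm : X →L[ℂ] X) ∘L B)) := by
    ext; simp
  rw [hV]
  exact (hXY _ _).id_sub_comp_swap.equiv_comp D

theorem essIncomparable_iff_schurCoupled_fredholm_general
    {X Y : Type*} [NormedAddCommGroup X] [NormedSpace ℂ X]
    [NormedAddCommGroup Y] [NormedSpace ℂ Y] [CompleteSpace Y] :
    EssentiallyIncomparable X Y ↔
      ∀ (U : X →L[ℂ] X) (V : Y →L[ℂ] Y), SchurCoupled U V →
        _root_.IsFredholm U ∧ _root_.IsFredholm V :=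
  ⟨fun hXY _ _ hUV => ⟨hUV.isFredholm_left hXY, hUV.isFredholm_right hXY⟩,
    fun h S T => (h _ _ (schurCoupled_id_sub_comp S T)).1⟩

theorem essIncomparable_iff_schurCoupled_fredholm
    {X Y : Type*} [NormedAddCommGroup X] [NormedSpace ℂ X] [CompleteSpace X]
    [NormedAddCommGroup Y] [NormedSpace ℂ Y] [CompleteSpace Y] :
    EssentiallyIncomparable X Y ↔
      ∀ (U : X →L[ℂ] X) (V : Y →L[ℂ] Y), SchurCoupled U V →
        _root_.IsFredholm U ∧ _root_.IsFredholm V :=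
  essIncomparable_iff_schurCoupled_fredholm_general
end

section
/- Equivalence after extension is an equivalence relation on the class of bounded Banach space operators: it is reflexive, symmetric, and transitive. -/
open ContinuousLinearMap

universe u

/-- A witness that `U ⊕ I_{X₀} = E (V ⊕ I_{Y₀}) F` with `E`, `F` invertible. -/
structure EAEWitness {X Y : Type u}
    [NormedAddCommGroup X] [NormedSpace ℂ X]
    [NormedAddCommGroup Y] [NormedSpace ℂ Y]
    (U : X →L[ℂ] X) (V : Y →L[ℂ] Y) : Type (u + 1) where
  X₀ : Type u
  Y₀ : Type u
  [instNX : NormedAddCommGroup X₀]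
  [instSX : NormedSpace ℂ X₀]
  [instCX : CompleteSpace X₀]
  [instNY : NormedAddCommGroup Y₀]
  [instSY : NormedSpace ℂ Y₀]
  [instCY : CompleteSpace Y₀]
  E : (Y × Y₀) ≃L[ℂ] (X × X₀)
  F : (X × X₀) ≃L[ℂ] (Y × Y₀)
  eq : U.prodMap (ContinuousLinearMap.id ℂ X₀) =
    (E : (Y × Y₀) →L[ℂ] (X × X₀)) ∘L (V.prodMap (ContinuousLinearMap.id ℂ Y₀)) ∘L
      (F : (X × X₀) →L[ℂ] (Y × Y₀))

/-- `U` and `V` are *equivalent after extension*. -/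
def EAE {X Y : Type u}
    [NormedAddCommGroup X] [NormedSpace ℂ X]
    [NormedAddCommGroup Y] [NormedSpace ℂ Y]
    (U : X →L[ℂ] X) (V : Y →L[ℂ] Y) : Prop :=
  Nonempty (EAEWitness U V)

/-
Write `S ~ T` when `S = E T F` with `E`, `F` invertible; `~` is an equivalence relation between
operators on different spaces, and `U` is EAE to `V` exactly when `U ⊕ I_{X₀} ~ V ⊕ I_{Y₀}` for
some Banach spaces `X₀`, `Y₀`. Reflexivity (with `X₀ = Y₀ = 0`) and symmetry are then immediate.
For transitivity, pad `U ⊕ I_{X₀} ~ V ⊕ I_{Y₀}` by `I_{Y₁}` and `V ⊕ I_{Y₁} ~ W ⊕ I_{Z₀}` by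
`I_{Y₀}`: the middle terms `V ⊕ I_{Y₀ × Y₁}` and `V ⊕ I_{Y₁ × Y₀}` are related by swapping
coordinates.
-/

namespace ContinuousLinearMap

variable {R P Q Q' A B : Type*} [Semiring R]
  [AddCommMonoid P] [Module R P] [TopologicalSpace P]
  [AddCommMonoid Q] [Module R Q] [TopologicalSpace Q]
  [AddCommMonoid Q'] [Module R Q'] [TopologicalSpace Q']
  [AddCommMonoid A] [Module R A] [TopologicalSpace A]
  [AddCommMonoid B] [Module R B] [TopologicalSpace B]

def Equivalent (S : P →L[R] P) (T : Q →L[R] Q) : Prop :=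
  ∃ (E : Q ≃L[R] P) (F : P ≃L[R] Q), S = (E : Q →L[R] P) ∘L T ∘L (F : P →L[R] Q)

infix:50 " ∼ₒ " => Equivalent

namespace Equivalent

theorem refl (S : P →L[R] P) : S ∼ₒ S :=
  ⟨.refl R P, .refl R P, rfl⟩

theorem symm {S : P →L[R] P} {T : Q →L[R] Q} (h : S ∼ₒ T) : T ∼ₒ S := by
  obtain ⟨E, F, rfl⟩ := h
  exact ⟨E.symm, F.symm, ext fun _ => by simp⟩

theorem trans {S : P →L[R] P} {T : Q →L[R] Q} {T' : Q' →L[R] Q'}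
    (h₁ : S ∼ₒ T) (h₂ : T ∼ₒ T') : S ∼ₒ T' := by
  obtain ⟨E₁, F₁, rfl⟩ := h₁
  obtain ⟨E₂, F₂, rfl⟩ := h₂
  exact ⟨E₂.trans E₁, F₁.trans F₂, rfl⟩

instance : Trans (Equivalent (R := R) (P := P) (Q := Q)) (Equivalent (R := R) (Q := Q'))
    Equivalent :=
  ⟨trans⟩

variable (A) in
theorem prodMap_id {S : P →L[R] P} {T : Q →L[R] Q} (h : S ∼ₒ T) :
    S.prodMap (.id R A) ∼ₒ T.prodMap (.id R A) := by
  obtain ⟨E, F, rfl⟩ := h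
  exact ⟨E.prodCongr (.refl R A), F.prodCongr (.refl R A), rfl⟩

end Equivalent

theorem equivalent_prodMap_id_prodMap_id (S : P →L[R] P) :
    (S.prodMap (.id R A)).prodMap (.id R B) ∼ₒ S.prodMap (.id R (A × B)) :=
  ⟨(ContinuousLinearEquiv.prodAssoc R P A B).symm, .prodAssoc R P A B, rfl⟩

theorem equivalent_prodMap_id_of_equiv (S : P →L[R] P) (σ : A ≃L[R] B) :
    S.prodMap (.id R A) ∼ₒ S.prodMap (.id R B) :=
  ⟨(ContinuousLinearEquiv.refl R P).prodCongr σ.symm, (ContinuousLinearEquiv.refl R P).prodCongr σ,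
    ext fun ⟨_, _⟩ => by simp⟩

end ContinuousLinearMap

section EAE

variable {X Y Z : Type u} [NormedAddCommGroup X] [NormedSpace ℂ X]
  [NormedAddCommGroup Y] [NormedSpace ℂ Y] [NormedAddCommGroup Z] [NormedSpace ℂ Z]
  {U : X →L[ℂ] X} {V : Y →L[ℂ] Y} {W : Z →L[ℂ] Z}

theorem EAE.of_equivalent {X₀ Y₀ : Type u}
    [NormedAddCommGroup X₀] [NormedSpace ℂ X₀] [CompleteSpace X₀]
    [NormedAddCommGroup Y₀] [NormedSpace ℂ Y₀] [CompleteSpace Y₀]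
    (h : U.prodMap (.id ℂ X₀) ∼ₒ V.prodMap (.id ℂ Y₀)) : EAE U V :=
  let ⟨E, F, hUV⟩ := h
  ⟨⟨X₀, Y₀, E, F, hUV⟩⟩

theorem EAE.refl (U : X →L[ℂ] X) : EAE U U :=
  .of_equivalent (X₀ := PUnit) (Y₀ := PUnit) (.refl _)

theorem EAE.symm (h : EAE U V) : EAE V U := by
  obtain ⟨⟨X₀, Y₀, E, F, hUV⟩⟩ := h
  exact .of_equivalent (Equivalent.symm ⟨E, F, hUV⟩)

theorem EAE.trans (h₁ : EAE U V) (h₂ : EAE V W) : EAE U W := by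
  obtain ⟨⟨X₀, Y₀, E₁, F₁, hUV⟩⟩ := h₁
  obtain ⟨⟨Y₁, Z₀, E₂, F₂, hVW⟩⟩ := h₂
  refine .of_equivalent (X₀ := X₀ × Y₁) (Y₀ := Z₀ × Y₀) ?_
  calc U.prodMap (.id ℂ (X₀ × Y₁)) ∼ₒ (U.prodMap (.id ℂ X₀)).prodMap (.id ℂ Y₁) :=
        (equivalent_prodMap_id_prodMap_id U).symm
    _ ∼ₒ (V.prodMap (.id ℂ Y₀)).prodMap (.id ℂ Y₁) := Equivalent.prodMap_id Y₁ ⟨E₁, F₁, hUV⟩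
    _ ∼ₒ V.prodMap (.id ℂ (Y₀ × Y₁)) := equivalent_prodMap_id_prodMap_id V
    _ ∼ₒ V.prodMap (.id ℂ (Y₁ × Y₀)) := equivalent_prodMap_id_of_equiv V (.prodComm ℂ Y₀ Y₁)
    _ ∼ₒ (V.prodMap (.id ℂ Y₁)).prodMap (.id ℂ Y₀) := (equivalent_prodMap_id_prodMap_id V).symm
    _ ∼ₒ (W.prodMap (.id ℂ Z₀)).prodMap (.id ℂ Y₀) := Equivalent.prodMap_id Y₀ ⟨E₂, F₂, hVW⟩
    _ ∼ₒ W.prodMap (.id ℂ (Z₀ × Y₀)) := equivalent_prodMap_id_prodMap_id W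

end EAE

/-- Equivalence after extension is reflexive, symmetric and transitive. -/
theorem eae_equivalence_relation :
    (∀ (X : Type u) [NormedAddCommGroup X] [NormedSpace ℂ X] [CompleteSpace X]
      (U : X →L[ℂ] X), EAE U U) ∧
    (∀ (X Y : Type u) [NormedAddCommGroup X] [NormedSpace ℂ X] [CompleteSpace X]
      [NormedAddCommGroup Y] [NormedSpace ℂ Y] [CompleteSpace Y]
      (U : X →L[ℂ] X) (V : Y →L[ℂ] Y), EAE U V → EAE V U) ∧
    (∀ (X Y Z : Type u) [NormedAddCommGroup X] [NormedSpace ℂ X] [CompleteSpace X]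
      [NormedAddCommGroup Y] [NormedSpace ℂ Y] [CompleteSpace Y]
      [NormedAddCommGroup Z] [NormedSpace ℂ Z] [CompleteSpace Z]
      (U : X →L[ℂ] X) (V : Y →L[ℂ] Y) (W : Z →L[ℂ] Z),
      EAE U V → EAE V W → EAE U W) :=
  ⟨fun _ _ _ _ => EAE.refl, fun _ _ _ _ _ _ _ _ _ _ => EAE.symm,
    fun _ _ _ _ _ _ _ _ _ _ _ _ _ _ _ => EAE.trans⟩
end
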